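/- Let K be an infinite compact Hausdorff space such that every bounded linear operator on C(K) is a weak multiplication, let L = K × Bool (Bool discrete), and define J' : C(L) → C(L) by (J'f)(x,false) = −f(x,true) and (J'f)(x,true) = f(x,false). Then J' ∘ J' = −I (where I is the identity operator on C(L)), J' is not a weak multiplier, and every bounded linear operator T on C(L) can be written as T = g·J' + W, where g ∈ C(L) (g·J' denotes the operator f ↦ g·(J'f)) and W is a weak multiplication on C(L). -/

import Mathlib

/-!
Write an operator `T` on `C(K × Bool)` as the `2 × 2` matrix of operators `π_i T σ_j` on `C(K)`.
By hypothesis each block is `g_ij I + S_ij` with `S_ij` weakly compact. The diagonal multipliers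
assemble into a multiplication operator on `C(K × Bool)`, while the off-diagonal ones, which move
values between the two copies of `K`, make up a multiple of `J'`; the weakly compact parts stay
weakly compact after being put back through `σ_i` and `π_j`.

`J'` is not a weak multiplier: bumps on `K` with pairwise disjoint supports, peaking at points
`x_n` and placed on the `true` copy, vanish at `(x_n, false)`, where `J'` evaluates them to `-1`.
Infinitely many such bumps exist because `K` is infinite and Hausdorff.
-/

open Filter Topology

/-- A bounded linear operator `T` on `C(K, ℝ)` is a *weak multiplier* if for every bounded
pairwise disjoint sequence `(e_n)` in `C(K, ℝ)` and every sequence `(x_n)` in `K` with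
`e_n (x_n) = 0` for all `n`, one has `T (e_n) (x_n) → 0`. -/
def IsWeakMultiplier {K : Type*} [TopologicalSpace K] [CompactSpace K]
    (T : C(K, ℝ) →L[ℝ] C(K, ℝ)) : Prop :=
  ∀ (e : ℕ → C(K, ℝ)) (x : ℕ → K),
    (∃ M : ℝ, ∀ n, ‖e n‖ ≤ M) →
    (∀ i j, i ≠ j → e i * e j = 0) →
    (∀ n, (e n) (x n) = 0) →
    Filter.Tendsto (fun n => (T (e n)) (x n)) Filter.atTop (nhds 0)

/-- An operator on `C(K, ℝ)` is *weakly compact* if the image of the closed unit ball has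
compact closure in the weak topology. -/
def IsWeaklyCompactOp {K : Type*} [TopologicalSpace K] [CompactSpace K]
    (S : C(K, ℝ) →L[ℝ] C(K, ℝ)) : Prop :=
  IsCompact (closure ((toWeakSpace ℝ C(K, ℝ)) '' (S '' Metric.closedBall 0 1)))

/-- An operator on `C(K, ℝ)` is a *weak multiplication* if it has the form `g•I + S` with
`g ∈ C(K, ℝ)` and `S` weakly compact. -/
def IsWeakMultiplication {K : Type*} [TopologicalSpace K] [CompactSpace K]
    (T : C(K, ℝ) →L[ℝ] C(K, ℝ)) : Prop :=
  ∃ (g : C(K, ℝ)) (S : C(K, ℝ) →L[ℝ] C(K, ℝ)),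
    IsWeaklyCompactOp S ∧ T = ContinuousLinearMap.mul ℝ C(K, ℝ) g + S

/-- A subset `A` of a real vector space is *lineable* if `A ∪ {0}` contains an
infinite-dimensional subspace. -/
def Lineable {X : Type*} [AddCommGroup X] [Module ℝ X] (A : Set X) : Prop :=
  ∃ W : Submodule ℝ X, ¬ FiniteDimensional ℝ W ∧ (W : Set X) ⊆ A ∪ {0}

/-- A subset `A` of a real normed space is *spaceable* if `A ∪ {0}` contains a closed
infinite-dimensional subspace. -/
def Spaceable {X : Type*} [NormedAddCommGroup X] [NormedSpace ℝ X] (A : Set X) : Prop :=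
  ∃ W : Submodule ℝ X, IsClosed (W : Set X) ∧ ¬ FiniteDimensional ℝ W ∧ (W : Set X) ⊆ A ∪ {0}

/-- The swap operator `J` on `C(K × Bool, ℝ)`, `(J f)(x, b) = f (x, ¬b)`. -/
noncomputable def swapOp (K : Type*) [TopologicalSpace K] [CompactSpace K] :
    C(K × Bool, ℝ) →L[ℝ] C(K × Bool, ℝ) :=
  LinearMap.mkContinuous
    { toFun := fun f => f.comp
        ⟨fun p => (p.1, !p.2),
          continuous_fst.prodMk ((continuous_of_discreteTopology (f := fun b : Bool => !b)).comp continuous_snd)⟩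
      map_add' := fun f g => rfl
      map_smul' := fun c f => rfl }
    1
    (fun f => by
      rw [one_mul]
      exact (ContinuousMap.norm_le _ (norm_nonneg f)).mpr fun p => f.norm_coe_le_norm _)

@[simp] theorem swapOp_apply {K : Type*} [TopologicalSpace K] [CompactSpace K]
    (f : C(K × Bool, ℝ)) (p : K × Bool) : swapOp K f p = f (p.1, !p.2) := rfl

/-- The restriction operator `π_i : C(K × Bool, ℝ) → C(K, ℝ)`, `π_i(f)(x) = f (x, i)`. -/
noncomputable def piOp (K : Type*) [TopologicalSpace K] [CompactSpace K] (i : Bool) :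
    C(K × Bool, ℝ) →L[ℝ] C(K, ℝ) :=
  LinearMap.mkContinuous
    { toFun := fun f => f.comp ⟨fun x => (x, i), continuous_id.prodMk continuous_const⟩
      map_add' := fun f g => rfl
      map_smul' := fun c f => rfl }
    1
    (fun f => by
      rw [one_mul]
      exact (ContinuousMap.norm_le _ (norm_nonneg f)).mpr fun x => f.norm_coe_le_norm _)

@[simp] theorem piOp_apply {K : Type*} [TopologicalSpace K] [CompactSpace K] (i : Bool)
    (f : C(K × Bool, ℝ)) (x : K) : piOp K i f x = f (x, i) := rfl

/-- The extension operator `σ_i : C(K, ℝ) → C(K × Bool, ℝ)`, `σ_i(g)(x, b) = g x` if `b = i`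
and `0` otherwise. -/
noncomputable def sigmaOp (K : Type*) [TopologicalSpace K] [CompactSpace K] (i : Bool) :
    C(K, ℝ) →L[ℝ] C(K × Bool, ℝ) :=
  LinearMap.mkContinuous
    { toFun := fun g =>
        ⟨fun p => if p.2 = i then g p.1 else 0, by
          have : (fun p : K × Bool => if p.2 = i then g p.1 else 0)
              = fun p : K × Bool => (if p.2 = i then (1 : ℝ) else 0) * g p.1 := by
            funext p
            by_cases h : p.2 = i <;> simp [h]
          rw [this]
          exact (((continuous_of_discreteTopology
              (f := fun b : Bool => if b = i then (1 : ℝ) else 0)).comp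
            continuous_snd).mul (g.continuous.comp continuous_fst))⟩
      map_add' := fun f g => by
        ext p
        by_cases h : p.2 = i <;> simp [h]
      map_smul' := fun c f => by
        ext p
        by_cases h : p.2 = i <;> simp [h] }
    1
    (fun g => by
      rw [one_mul]
      refine (ContinuousMap.norm_le _ (norm_nonneg g)).mpr fun p => ?_
      simp only [ContinuousMap.coe_mk, LinearMap.coe_mk, AddHom.coe_mk]
      by_cases h : p.2 = i
      · simpa [h] using g.norm_coe_le_norm p.1
      · simp [h])

@[simp] theorem sigmaOp_apply {K : Type*} [TopologicalSpace K] [CompactSpace K] (i : Bool)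
    (g : C(K, ℝ)) (p : K × Bool) : sigmaOp K i g p = if p.2 = i then g p.1 else 0 := rfl

/-- The skew swap operator `J'` on `C(K × Bool, ℝ)`: `(J' f)(x, false) = -f (x, true)` and
`(J' f)(x, true) = f (x, false)`. -/
noncomputable def skewSwapOp (K : Type*) [TopologicalSpace K] [CompactSpace K] :
    C(K × Bool, ℝ) →L[ℝ] C(K × Bool, ℝ) :=
  LinearMap.mkContinuous
    { toFun := fun f =>
        ⟨fun p => if p.2 then f (p.1, false) else -f (p.1, true), by
          have : (fun p : K × Bool => if p.2 then f (p.1, false) else -f (p.1, true))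
              = fun p : K × Bool => (if p.2 then (1 : ℝ) else 0) * f (p.1, false)
                  + (if p.2 then (0 : ℝ) else -1) * f (p.1, true) := by
            funext p
            rcases p with ⟨x, b⟩
            cases b <;> simp
          rw [this]
          have h1 : Continuous fun p : K × Bool => f (p.1, false) :=
            f.continuous.comp (continuous_fst.prodMk continuous_const)
          have h2 : Continuous fun p : K × Bool => f (p.1, true) :=
            f.continuous.comp (continuous_fst.prodMk continuous_const)
          exact ((((continuous_of_discreteTopology
                (f := fun b : Bool => if b then (1 : ℝ) else 0)).comp
              continuous_snd).mul h1).add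
            (((continuous_of_discreteTopology
                (f := fun b : Bool => if b then (0 : ℝ) else -1)).comp
              continuous_snd).mul h2))⟩
      map_add' := fun f g => by
        ext p
        rcases p with ⟨x, b⟩
        cases b <;> simp <;> ring
      map_smul' := fun c f => by
        ext p
        rcases p with ⟨x, b⟩
        cases b <;> simp }
    1
    (fun f => by
      rw [one_mul]
      refine (ContinuousMap.norm_le _ (norm_nonneg f)).mpr fun p => ?_
      rcases p with ⟨x, b⟩
      cases b
      · simpa using f.norm_coe_le_norm (x, true)
      · simpa using f.norm_coe_le_norm (x, false))

@[simp] theorem skewSwapOp_apply {K : Type*} [TopologicalSpace K] [CompactSpace K]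
    (f : C(K × Bool, ℝ)) (p : K × Bool) :
    skewSwapOp K f p = if p.2 then f (p.1, false) else -f (p.1, true) := rfl

/-- `IsWeaklyCompactOp` is the special case `E = F = C(K, ℝ)`, definitionally. -/
def IsWeaklyCompactOperator {E F : Type*} [NormedAddCommGroup E] [NormedSpace ℝ E]
    [NormedAddCommGroup F] [NormedSpace ℝ F] (S : E →L[ℝ] F) : Prop :=
  IsCompact (closure (toWeakSpace ℝ F '' (S '' Metric.closedBall 0 1)))

namespace IsWeaklyCompactOperator

variable {E F G : Type*} [NormedAddCommGroup E] [NormedSpace ℝ E]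
  [NormedAddCommGroup F] [NormedSpace ℝ F] [NormedAddCommGroup G] [NormedSpace ℝ G]

theorem zero : IsWeaklyCompactOperator (0 : E →L[ℝ] F) :=
  (isCompact_singleton (x := 0)).closure_of_subset (by simp)

theorem add {S₁ S₂ : E →L[ℝ] F} (h₁ : IsWeaklyCompactOperator S₁)
    (h₂ : IsWeaklyCompactOperator S₂) : IsWeaklyCompactOperator (S₁ + S₂) := by
  refine (IsCompact.add h₁ h₂).closure_of_subset ?_
  rintro _ ⟨_, ⟨x, hx, rfl⟩, rfl⟩
  exact Set.add_mem_add (subset_closure ⟨_, ⟨x, hx, rfl⟩, rfl⟩)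
    (subset_closure ⟨_, ⟨x, hx, rfl⟩, rfl⟩)

theorem sum {ι : Type*} (s : Finset ι) {S : ι → E →L[ℝ] F}
    (h : ∀ i ∈ s, IsWeaklyCompactOperator (S i)) : IsWeaklyCompactOperator (∑ i ∈ s, S i) :=
  Finset.sum_induction S _ (fun _ _ => add) zero h

theorem clm_comp {S : E →L[ℝ] F} (hS : IsWeaklyCompactOperator S) (A : F →L[ℝ] G) :
    IsWeaklyCompactOperator (A.comp S) := by
  refine (IsCompact.image hS (WeakSpace.map A).continuous).closure_of_subset ?_
  rintro _ ⟨_, ⟨x, hx, rfl⟩, rfl⟩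
  exact ⟨_, subset_closure ⟨_, ⟨x, hx, rfl⟩, rfl⟩, rfl⟩

open scoped Pointwise in
theorem comp_clm {S : F →L[ℝ] G} (hS : IsWeaklyCompactOperator S) (B : E →L[ℝ] F) :
    IsWeaklyCompactOperator (S.comp B) := by
  refine (IsCompact.smul ‖B‖ hS).closure_of_subset ?_
  rintro _ ⟨_, ⟨x, hx, rfl⟩, rfl⟩
  have hBx : B x ∈ ‖B‖ • Metric.closedBall (0 : F) 1 := by
    rw [smul_unitClosedBall, Real.norm_of_nonneg (norm_nonneg B), mem_closedBall_zero_iff]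
    simpa using B.le_opNorm_of_le (mem_closedBall_zero_iff.mp hx)
  obtain ⟨y, hy, hyx⟩ := hBx
  exact ⟨_, subset_closure ⟨_, ⟨y, hy, rfl⟩, rfl⟩, by simp [← hyx]⟩

end IsWeaklyCompactOperator

section SkewSwap

variable {K : Type*} [TopologicalSpace K] [CompactSpace K]

theorem skewSwapOp_comp_self :
    (skewSwapOp K).comp (skewSwapOp K) = -(ContinuousLinearMap.id ℝ C(K × Bool, ℝ)) := by
  ext f ⟨x, b⟩
  cases b <;> simp

theorem sum_sigmaOp_piOp (f : C(K × Bool, ℝ)) : ∑ i, sigmaOp K i (piOp K i f) = f := by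
  ext ⟨x, b⟩
  cases b <;> simp

theorem sigmaOp_mul (i : Bool) (u v : C(K, ℝ)) :
    sigmaOp K i (u * v) = sigmaOp K i u * sigmaOp K i v := by
  ext ⟨x, b⟩
  by_cases h : b = i <;> simp [h]

theorem norm_sigmaOp_apply_le (i : Bool) (u : C(K, ℝ)) : ‖sigmaOp K i u‖ ≤ ‖u‖ := by
  simpa using (sigmaOp K i).le_of_opNorm_le (LinearMap.mkContinuous_norm_le _ zero_le_one _) u

variable (K) in
theorem exists_seq_pairwise_disjoint_bump [T2Space K] [Infinite K] :
    ∃ (e : ℕ → C(K, ℝ)) (x : ℕ → K), (∀ n, ‖e n‖ ≤ 1) ∧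
      Pairwise (fun i j => e i * e j = 0) ∧ ∀ n, e n (x n) = 1 := by
  obtain ⟨U, hU, hUo, hUd⟩ := exists_seq_infinite_isOpen_pairwise_disjoint K
  choose x hx using fun n => (hU n).nonempty
  have bump (n : ℕ) :
      ∃ e : C(K, ℝ), Set.EqOn e 0 (U n)ᶜ ∧ e (x n) = 1 ∧ ∀ y, e y ∈ Set.Icc (0 : ℝ) 1 := by
    obtain ⟨e, h0, h1, hI⟩ := exists_continuous_zero_one_of_isClosed (hUo n).isClosed_compl
      isClosed_singleton (Set.disjoint_singleton_right.2 (not_not_intro (hx n)))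
    exact ⟨e, h0, h1 rfl, hI⟩
  choose e he0 he1 heI using bump
  refine ⟨e, x, fun n => ?_, fun i j hij => ?_, he1⟩
  · refine (ContinuousMap.norm_le _ zero_le_one).2 fun y => abs_le.2 ⟨?_, (heI n y).2⟩
    linarith [(heI n y).1]
  · ext y
    by_cases hy : y ∈ U i
    · simp [he0 j (Set.disjoint_left.1 (hUd hij) hy)]
    · simp [he0 i hy]

theorem not_isWeakMultiplier_skewSwapOp [T2Space K] [Infinite K] :
    ¬ IsWeakMultiplier (skewSwapOp K) := by
  intro hJ
  obtain ⟨e, x, he_norm, he_disj, he_one⟩ := exists_seq_pairwise_disjoint_bump K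
  have hlim := hJ (fun n => sigmaOp K true (e n)) (fun n => (x n, false))
    ⟨1, fun n => (norm_sigmaOp_apply_le _ _).trans (he_norm n)⟩
    (fun i j hij => by rw [← sigmaOp_mul, he_disj hij, map_zero]) (fun n => by simp)
  simp [he_one] at hlim

theorem eq_mul_comp_skewSwapOp_add (T : C(K × Bool, ℝ) →L[ℝ] C(K × Bool, ℝ))
    {g : Bool → Bool → C(K, ℝ)} {S : Bool → Bool → C(K, ℝ) →L[ℝ] C(K, ℝ)}
    (hT : ∀ i j, (piOp K i).comp (T.comp (sigmaOp K j)) =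
      ContinuousLinearMap.mul ℝ C(K, ℝ) (g i j) + S i j) :
    T = (ContinuousLinearMap.mul ℝ C(K × Bool, ℝ)
          (sigmaOp K true (g true false) - sigmaOp K false (g false true))).comp (skewSwapOp K) +
        (ContinuousLinearMap.mul ℝ C(K × Bool, ℝ)
          (sigmaOp K true (g true true) + sigmaOp K false (g false false)) +
        ∑ i, ∑ j, (sigmaOp K i).comp ((S i j).comp (piOp K j))) := by
  ext f ⟨x, i⟩
  have hblock (j : Bool) (u : C(K, ℝ)) :
      T (sigmaOp K j u) (x, i) = g i j x * u x + S i j u x :=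
    congr($(hT i j) u x)
  conv_lhs => rw [← sum_sigmaOp_piOp f, map_sum]
  cases i <;> simp [hblock] <;> ring

end SkewSwap

/-- If every operator on `C(K, ℝ)` is a weak multiplication (`K` infinite compact Hausdorff),
then the operator `J'` on `C(K × Bool, ℝ)` defined by `(J' f)(x, false) = -f (x, true)` and
`(J' f)(x, true) = f (x, false)` satisfies `J' ∘ J' = -I`, `J'` is not a weak multiplier,
and every operator `T` on `C(K × Bool, ℝ)` has the form `g·J' + W` with `g ∈ C(K × Bool, ℝ)`
and `W` a weak multiplication. -/
theorem skewSwapOp_properties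
    {K : Type*} [TopologicalSpace K] [CompactSpace K] [T2Space K] [Infinite K]
    (hfew : ∀ S : C(K, ℝ) →L[ℝ] C(K, ℝ), IsWeakMultiplication S) :
    (skewSwapOp K).comp (skewSwapOp K) = -(ContinuousLinearMap.id ℝ C(K × Bool, ℝ)) ∧
    ¬ IsWeakMultiplier (skewSwapOp K) ∧
    ∀ T : C(K × Bool, ℝ) →L[ℝ] C(K × Bool, ℝ),
      ∃ (g : C(K × Bool, ℝ)) (W : C(K × Bool, ℝ) →L[ℝ] C(K × Bool, ℝ)),
        IsWeakMultiplication W ∧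
        T = (ContinuousLinearMap.mul ℝ C(K × Bool, ℝ) g).comp (skewSwapOp K) + W := by
  refine ⟨skewSwapOp_comp_self, not_isWeakMultiplier_skewSwapOp, fun T => ?_⟩
  choose g S hS hT using fun i j => hfew ((piOp K i).comp (T.comp (sigmaOp K j)))
  have hW : IsWeaklyCompactOp (∑ i, ∑ j, (sigmaOp K i).comp ((S i j).comp (piOp K j))) :=
    IsWeaklyCompactOperator.sum _ fun i _ => IsWeaklyCompactOperator.sum _ fun j _ =>
      (IsWeaklyCompactOperator.comp_clm (hS i j) _).clm_comp _
  exact ⟨_, _, ⟨_, _, hW, rfl⟩, eq_mul_comp_skewSwapOp_add T hT⟩
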